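/- Fix natural numbers n and q with q ≥ 1, let u : (Fin (q+1) → Fin n) → ℂ be alternating, and let λ : Fin n → Fin n → ℂ. Then Σ_{l ∈ Fin n} Σ_{I : Fin (q−1) → Fin n strictly increasing} Σ_{i, j ∈ Fin n} λ(i)(j)·u(l :: i :: I)·conj(u(l :: j :: I)) = q · Σ_{I : Fin q → Fin n strictly increasing} Σ_{i, j ∈ Fin n} λ(i)(j)·u(i :: I)·conj(u(j :: I)). -/
import Mathlib

open scoped Classical

section Aux

variable {n : ℕ}

private lemma alt_zero {N : ℕ} (u : (Fin N → Fin n) → ℂ)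
    (halt : ∀ (v : Fin N → Fin n) (σ : Equiv.Perm (Fin N)),
      u (v ∘ σ) = ((Equiv.Perm.sign σ : ℤ) : ℂ) * u v)
    (v : Fin N → Fin n) (hv : ¬ Function.Injective v) : u v = 0 := by
  obtain ⟨a, b, hab, hne⟩ := Function.not_injective_iff.mp hv
  have h2 : v ∘ (Equiv.swap a b) = v := by
    funext x
    simp only [Function.comp_apply, Equiv.swap_apply_def]
    split_ifs with h h' <;> simp_all
  have h1 := halt v (Equiv.swap a b)
  rw [h2, Equiv.Perm.sign_swap hne] at h1
  simp only [Units.val_neg, Units.val_one, Int.cast_neg, Int.cast_one, neg_mul, one_mul] at h1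
  linear_combination h1 / 2

private lemma pair_inv {N : ℕ} (u : (Fin N → Fin n) → ℂ)
    (halt : ∀ (v : Fin N → Fin n) (σ : Equiv.Perm (Fin N)),
      u (v ∘ σ) = ((Equiv.Perm.sign σ : ℤ) : ℂ) * u v)
    (v w : Fin N → Fin n) (τ : Equiv.Perm (Fin N)) :
    u (v ∘ τ) * (starRingEnd ℂ) (u (w ∘ τ)) = u v * (starRingEnd ℂ) (u w) := by
  have hs : ((Equiv.Perm.sign τ : ℤ) : ℂ) * ((Equiv.Perm.sign τ : ℤ) : ℂ) = 1 := by
    rw [← Int.cast_mul, ← Units.val_mul, Int.units_mul_self, Units.val_one, Int.cast_one]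
  rw [halt v τ, halt w τ, map_mul, map_intCast]
  calc ((Equiv.Perm.sign τ : ℤ) : ℂ) * u v *
        (((Equiv.Perm.sign τ : ℤ) : ℂ) * (starRingEnd ℂ) (u w))
      = (((Equiv.Perm.sign τ : ℤ) : ℂ) * ((Equiv.Perm.sign τ : ℤ) : ℂ)) *
        (u v * (starRingEnd ℂ) (u w)) := by ring
    _ = u v * (starRingEnd ℂ) (u w) := by rw [hs, one_mul]

private lemma cons_comp_lift {k : ℕ} (x : Fin n) (f : Fin k → Fin n) (σ : Equiv.Perm (Fin k)) :
    (Fin.cons x f : Fin (k + 1) → Fin n) ∘ (Equiv.Perm.decomposeFin.symm (0, σ)) =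
      Fin.cons x (f ∘ σ) := by
  funext a
  refine Fin.cases ?_ (fun b => ?_) a
  · simp [Equiv.Perm.decomposeFin_symm_apply_zero]
  · simp [Equiv.Perm.decomposeFin_symm_apply_succ]

private lemma injective_of_cons {k : ℕ} {x : Fin n} {f : Fin k → Fin n}
    (h : Function.Injective (Fin.cons x f : Fin (k + 1) → Fin n)) : Function.Injective f := by
  intro a b hab
  have h2 : (Fin.cons x f : Fin (k + 1) → Fin n) a.succ =
      (Fin.cons x f : Fin (k + 1) → Fin n) b.succ := by simpa using hab
  exact Fin.succ_injective _ (h h2)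

private lemma strictMono_eq_of_image_eq {k : ℕ} {f g : Fin k → Fin n}
    (hf : StrictMono f) (hg : StrictMono g)
    (h : Finset.image f Finset.univ = Finset.image g Finset.univ) : f = g := by
  have hcard : (Finset.image f Finset.univ).card = k := by
    rw [Finset.card_image_of_injective _ hf.injective, Finset.card_univ, Fintype.card_fin]
  have h1 := Finset.orderEmbOfFin_unique hcard (f := f)
    (fun x => Finset.mem_image_of_mem f (Finset.mem_univ x)) hf
  have h2 := Finset.orderEmbOfFin_unique hcard (f := g)
    (fun x => h ▸ Finset.mem_image_of_mem g (Finset.mem_univ x)) hg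
  rw [h1, h2]

/-- Sum over all tuples equals `k!` times the sum over strictly increasing tuples, for a
symmetric function vanishing on non-injective tuples. -/
private lemma sum_eq_factorial_mul (k : ℕ) (G : (Fin k → Fin n) → ℂ)
    (hsym : ∀ (K : Fin k → Fin n) (σ : Equiv.Perm (Fin k)), G (K ∘ σ) = G K)
    (hzero : ∀ K : Fin k → Fin n, ¬ Function.Injective K → G K = 0) :
    ∑ K : Fin k → Fin n, G K
      = (k.factorial : ℂ) *
        ∑ I ∈ Finset.univ.filter (fun I : Fin k → Fin n => StrictMono I), G I := by
  classical
  have h1 : ∑ K ∈ Finset.univ.filter (fun K : Fin k → Fin n => Function.Injective K), G K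
      = ∑ K : Fin k → Fin n, G K := by
    apply Finset.sum_filter_of_ne
    intro K _ hK
    by_contra h
    exact hK (hzero K h)
  have h2 : ∑ p ∈ (Finset.univ.filter (fun I : Fin k → Fin n => StrictMono I)) ×ˢ
        (Finset.univ : Finset (Equiv.Perm (Fin k))), G p.1
      = ∑ K ∈ Finset.univ.filter (fun K : Fin k → Fin n => Function.Injective K), G K := by
    apply Finset.sum_nbij (fun p => p.1 ∘ p.2)
    · intro p hp
      rw [Finset.mem_product, Finset.mem_filter] at hp
      rw [Finset.mem_filter]
      exact ⟨Finset.mem_univ _, hp.1.2.injective.comp p.2.injective⟩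
    · intro p hp p' hp' hEq
      rw [Finset.mem_coe, Finset.mem_product, Finset.mem_filter] at hp hp'
      have hEq' : p.1 ∘ ⇑p.2 = p'.1 ∘ ⇑p'.2 := hEq
      have himg : Finset.image p.1 Finset.univ = Finset.image p'.1 Finset.univ := by
        have e1 : Finset.image (p.1 ∘ p.2) Finset.univ = Finset.image p.1 Finset.univ := by
          rw [← Finset.image_image]
          congr 1
          exact Finset.image_univ_equiv p.2
        have e2 : Finset.image (p'.1 ∘ p'.2) Finset.univ = Finset.image p'.1 Finset.univ := by
          rw [← Finset.image_image]
          congr 1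
          exact Finset.image_univ_equiv p'.2
        rw [← e1, ← e2, hEq']
      have hfst : p.1 = p'.1 := strictMono_eq_of_image_eq hp.1.2 hp'.1.2 himg
      have hsnd : p.2 = p'.2 := by
        apply Equiv.ext; intro a
        apply hp.1.2.injective
        have h3 := congrFun hEq' a
        simp only [Function.comp_apply] at h3
        rw [h3, hfst]
      exact Prod.ext hfst hsnd
    · intro K hK
      rw [Finset.mem_coe, Finset.mem_filter] at hK
      have hKinj : Function.Injective K := hK.2
      set s : Finset (Fin n) := Finset.image K Finset.univ with hs
      have hcard : s.card = k := by
        rw [hs, Finset.card_image_of_injective _ hKinj, Finset.card_univ, Fintype.card_fin]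
      set I : Fin k → Fin n := fun a => s.orderEmbOfFin hcard a with hI
      have hImono : StrictMono I := (s.orderEmbOfFin hcard).strictMono
      have hbij : Function.Bijective (fun a => (⟨K a, by
          rw [hs]; exact Finset.mem_image_of_mem K (Finset.mem_univ a)⟩ : s)) := by
        rw [Fintype.bijective_iff_injective_and_card]
        constructor
        · intro a b hab
          exact hKinj (congrArg Subtype.val hab)
        · rw [Fintype.card_coe, hcard, Fintype.card_fin]
      set σ : Equiv.Perm (Fin k) :=
        (Equiv.ofBijective _ hbij).trans (s.orderIsoOfFin hcard).symm.toEquiv with hσ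
      refine ⟨(I, σ), ?_, ?_⟩
      · rw [Finset.mem_coe, Finset.mem_product, Finset.mem_filter]
        exact ⟨⟨Finset.mem_univ _, hImono⟩, Finset.mem_univ _⟩
      · funext a
        show I (σ a) = K a
        have hσa : σ a = (s.orderIsoOfFin hcard).symm
            ⟨K a, by rw [hs]; exact Finset.mem_image_of_mem K (Finset.mem_univ a)⟩ := rfl
        rw [hσa]
        exact congrArg Subtype.val ((s.orderIsoOfFin hcard).apply_symm_apply _)
    · intro p hp
      exact (hsym p.1 p.2).symm
  rw [← h1, ← h2, Finset.sum_product]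
  rw [Finset.mul_sum]
  apply Finset.sum_congr rfl
  intro I _
  rw [show (∑ y : Equiv.Perm (Fin k), G ((I, y) : _ × _).1) = ∑ _y : Equiv.Perm (Fin k), G I
    from rfl]
  rw [Finset.sum_const, Finset.card_univ, Fintype.card_perm, Fintype.card_fin, nsmul_eq_mul]

end Aux

section Main

variable {n : ℕ}

private lemma sum_cons_eq (m : ℕ) (T : (Fin (m + 1) → Fin n) → ℂ)
    (hsym : ∀ (K : Fin (m + 1) → Fin n) (σ : Equiv.Perm (Fin (m + 1))), T (K ∘ σ) = T K)
    (hzero : ∀ K : Fin (m + 1) → Fin n, ¬ Function.Injective K → T K = 0) :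
    ∑ l : Fin n, ∑ I ∈ Finset.univ.filter (fun I : Fin m → Fin n => StrictMono I),
        T (Fin.cons l I)
      = ((m + 1 : ℕ) : ℂ) *
        ∑ J ∈ Finset.univ.filter (fun J : Fin (m + 1) → Fin n => StrictMono J), T J := by
  classical
  have h1 := sum_eq_factorial_mul (m + 1) T hsym hzero
  have h2 : ∀ l : Fin n, ∑ I : Fin m → Fin n, T (Fin.cons l I)
      = (m.factorial : ℂ) * ∑ I ∈ Finset.univ.filter (fun I : Fin m → Fin n => StrictMono I),
          T (Fin.cons l I) := by
    intro l
    apply sum_eq_factorial_mul m (fun I => T (Fin.cons l I))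
    · intro K σ
      show T (Fin.cons l (K ∘ ⇑σ)) = T (Fin.cons l K)
      rw [show Fin.cons l (K ∘ ⇑σ) = (Fin.cons l K) ∘ ⇑(Equiv.Perm.decomposeFin.symm (0, σ))
        from (cons_comp_lift l K σ).symm]
      exact hsym _ _
    · intro K hK
      exact hzero _ (fun h => hK (injective_of_cons h))
  have h3 : ∑ K : Fin (m + 1) → Fin n, T K
      = ∑ p : Fin n × (Fin m → Fin n), T (Fin.cons p.1 p.2) :=
    (Fintype.sum_equiv (Fin.consEquiv (fun _ => Fin n)) _ _ (fun p => rfl)).symm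
  have hfac : (m.factorial : ℂ) ≠ 0 := Nat.cast_ne_zero.mpr (Nat.factorial_ne_zero m)
  apply mul_left_cancel₀ hfac
  rw [Finset.mul_sum]
  calc ∑ l : Fin n, (m.factorial : ℂ) *
          ∑ I ∈ Finset.univ.filter (fun I : Fin m → Fin n => StrictMono I), T (Fin.cons l I)
      = ∑ l : Fin n, ∑ I : Fin m → Fin n, T (Fin.cons l I) :=
        Finset.sum_congr rfl (fun l _ => (h2 l).symm)
    _ = ∑ p : Fin n × (Fin m → Fin n), T (Fin.cons p.1 p.2) := by
        rw [Fintype.sum_prod_type]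
    _ = ∑ K : Fin (m + 1) → Fin n, T K := h3.symm
    _ = ((m + 1).factorial : ℂ) *
          ∑ J ∈ Finset.univ.filter (fun J : Fin (m + 1) → Fin n => StrictMono J), T J := h1
    _ = (m.factorial : ℂ) * (((m + 1 : ℕ) : ℂ) *
          ∑ J ∈ Finset.univ.filter (fun J : Fin (m + 1) → Fin n => StrictMono J), T J) := by
        rw [Nat.factorial_succ]; push_cast; ring

private lemma main_aux (m : ℕ) (u : (Fin (m + 2) → Fin n) → ℂ)
    (halt : ∀ (v : Fin (m + 2) → Fin n) (σ : Equiv.Perm (Fin (m + 2))),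
      u (v ∘ σ) = ((Equiv.Perm.sign σ : ℤ) : ℂ) * u v)
    (lam : Fin n → Fin n → ℂ) :
    ∑ l : Fin n, ∑ I ∈ Finset.univ.filter (fun I : Fin m → Fin n => StrictMono I),
        ∑ i : Fin n, ∑ j : Fin n,
          lam i j * u (Fin.cons l (Fin.cons i I)) *
            (starRingEnd ℂ) (u (Fin.cons l (Fin.cons j I)))
      = ((m + 1 : ℕ) : ℂ) *
        ∑ J ∈ Finset.univ.filter (fun J : Fin (m + 1) → Fin n => StrictMono J),
          ∑ i : Fin n, ∑ j : Fin n,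
            lam i j * u (Fin.cons i J) * (starRingEnd ℂ) (u (Fin.cons j J)) := by
  classical
  have hswap : ∀ (x y : Fin n) (f : Fin m → Fin n),
      (Fin.cons x (Fin.cons y f) : Fin (m + 2) → Fin n)
        = (Fin.cons y (Fin.cons x f) : Fin (m + 2) → Fin n) ∘
            ⇑(Equiv.swap (0 : Fin (m + 2)) 1) := by
    intro x y f
    funext a
    refine Fin.cases ?_ (fun b => ?_) a
    · rw [Function.comp_apply, Equiv.swap_apply_left, Fin.cons_zero, ← Fin.succ_zero_eq_one,
        Fin.cons_succ, Fin.cons_zero]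
    · refine Fin.cases ?_ (fun c => ?_) b
      · simp [Fin.succ_zero_eq_one, Equiv.swap_apply_right]
      · rw [Function.comp_apply,
          Equiv.swap_apply_of_ne_of_ne (Fin.succ_ne_zero _) (by simp [Fin.ext_iff])]
        simp [Fin.cons_succ]
  have hsymT : ∀ (K : Fin (m + 1) → Fin n) (σ : Equiv.Perm (Fin (m + 1))),
      (∑ i : Fin n, ∑ j : Fin n,
          lam i j * (u (Fin.cons i (K ∘ ⇑σ)) * (starRingEnd ℂ) (u (Fin.cons j (K ∘ ⇑σ)))))
        = ∑ i : Fin n, ∑ j : Fin n,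
            lam i j * (u (Fin.cons i K) * (starRingEnd ℂ) (u (Fin.cons j K))) := by
    intro K σ
    refine Finset.sum_congr rfl (fun i _ => Finset.sum_congr rfl (fun j _ => ?_))
    congr 1
    rw [show Fin.cons i (K ∘ ⇑σ) = (Fin.cons i K) ∘ ⇑(Equiv.Perm.decomposeFin.symm (0, σ))
        from (cons_comp_lift i K σ).symm,
      show Fin.cons j (K ∘ ⇑σ) = (Fin.cons j K) ∘ ⇑(Equiv.Perm.decomposeFin.symm (0, σ))
        from (cons_comp_lift j K σ).symm]
    exact pair_inv u halt _ _ _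
  have hzeroT : ∀ K : Fin (m + 1) → Fin n, ¬ Function.Injective K →
      (∑ i : Fin n, ∑ j : Fin n,
        lam i j * (u (Fin.cons i K) * (starRingEnd ℂ) (u (Fin.cons j K)))) = 0 := by
    intro K hK
    have hz : ∀ i : Fin n, u (Fin.cons i K) = 0 :=
      fun i => alt_zero u halt _ (fun h => hK (injective_of_cons h))
    simp [hz]
  have hpoint : ∀ (l i j : Fin n) (I : Fin m → Fin n),
      u (Fin.cons l (Fin.cons i I)) * (starRingEnd ℂ) (u (Fin.cons l (Fin.cons j I)))
        = u (Fin.cons i (Fin.cons l I)) * (starRingEnd ℂ) (u (Fin.cons j (Fin.cons l I))) := by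
    intro l i j I
    rw [hswap l i I, hswap l j I]
    exact pair_inv u halt _ _ _
  refine Eq.trans ?_ (Eq.trans (sum_cons_eq m (fun K => ∑ i : Fin n, ∑ j : Fin n,
      lam i j * (u (Fin.cons i K) * (starRingEnd ℂ) (u (Fin.cons j K)))) hsymT hzeroT) ?_)
  · refine Finset.sum_congr rfl fun l _ => Finset.sum_congr rfl fun I _ =>
      Finset.sum_congr rfl fun i _ => Finset.sum_congr rfl fun j _ => ?_
    rw [mul_assoc, hpoint l i j I]
  · refine congrArg _ (Finset.sum_congr rfl fun J _ => Finset.sum_congr rfl fun i _ =>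
      Finset.sum_congr rfl fun j _ => ?_)
    rw [mul_assoc]

end Main

/-- Let `q ≥ 1`, `u : (Fin (q+1) → Fin n) → ℂ` alternating, and
`lam : Fin n → Fin n → ℂ`.  Then
`Σ_l Σ_{I : Fin (q-1) → Fin n strictly increasing} Σ_{i,j} lam i j · u (l :: i :: I) · conj (u (l :: j :: I))
  = q · Σ_{I : Fin q → Fin n strictly increasing} Σ_{i,j} lam i j · u (i :: I) · conj (u (j :: I))`. -/
theorem sum_hermitian_pairing_cons_alternating (n q : ℕ) (hq : 1 ≤ q)
    (u : (Fin (q + 1) → Fin n) → ℂ)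
    (halt : ∀ (v : Fin (q + 1) → Fin n) (σ : Equiv.Perm (Fin (q + 1))),
      u (v ∘ σ) = ((Equiv.Perm.sign σ : ℤ) : ℂ) * u v)
    (lam : Fin n → Fin n → ℂ) :
    ∑ l : Fin n,
        ∑ I ∈ Finset.univ.filter (fun I : Fin (q - 1) → Fin n => StrictMono I),
          ∑ i : Fin n, ∑ j : Fin n,
            lam i j *
              u ((Fin.cons l (Fin.cons i I)) ∘
                Fin.cast (show q + 1 = q - 1 + 1 + 1 by omega)) *
              (starRingEnd ℂ)
                (u ((Fin.cons l (Fin.cons j I)) ∘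
                  Fin.cast (show q + 1 = q - 1 + 1 + 1 by omega))) =
      (q : ℂ) *
        ∑ I ∈ Finset.univ.filter (fun I : Fin q → Fin n => StrictMono I),
          ∑ i : Fin n, ∑ j : Fin n,
            lam i j * u (Fin.cons i I) * (starRingEnd ℂ) (u (Fin.cons j I)) := by
  obtain ⟨m, rfl⟩ : ∃ m, q = m + 1 := ⟨q - 1, by omega⟩
  exact main_aux m u halt lam
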